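/- Let $w \in C^2(\mathbb{R})$ be periodic with period 1, and let $\alpha, \beta$ be real numbers such that $w''(t) + \alpha w'(t) \ge \beta$ for all $t \in \mathbb{R}$. Then $|w'(t)| \le 2|\beta| e^{2|\alpha|}$ for all $t \in \mathbb{R}$. -/

import Mathlib

/-! Since `w` is periodic, `w'` vanishes at a maximum point of `w`, hence somewhere in every
interval of length 1. With the integrating factor `e^{α (s - t)}`, the inequality
`w'' + α w' ≥ β` says that `e^{α (s - t)} w'(s)` decreases at rate at most `|β| e^{|α|}` on
`[t - 1, t + 1]`; comparing with zeros of `w'` in `[t - 1, t]` and in `[t, t + 1]` gives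
`|w'(t)| ≤ |β| e^{|α|}`. -/

open Real Set Function

theorem Function.Periodic.deriv {𝕜 F : Type*} [NontriviallyNormedField 𝕜] [NormedAddCommGroup F]
    [NormedSpace 𝕜 F] {f : 𝕜 → F} {c : 𝕜} (hf : Periodic f c) : Periodic (deriv f) c := by
  intro x
  rw [← deriv_comp_add_const, show (fun x => f (x + c)) = f from funext hf]

theorem Function.Periodic.exists_forall_ge {f : ℝ → ℝ} {c : ℝ} (hf : Periodic f c)
    (hc : c ≠ 0) (hcont : Continuous f) : ∃ x, ∀ y, f y ≤ f x := by
  obtain ⟨_, ⟨x, rfl⟩, hmax⟩ :=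
    (hf.compact_of_continuous hc hcont).exists_isGreatest (range_nonempty f)
  exact ⟨x, fun y => hmax ⟨y, rfl⟩⟩

section IntegratingFactor

variable {v : ℝ → ℝ} {α β : ℝ}

theorem hasDerivAt_exp_mul_sub_mul (hv : Differentiable ℝ v) (t s : ℝ) :
    HasDerivAt (fun s => exp (α * (s - t)) * v s)
      (exp (α * (s - t)) * (deriv v s + α * v s)) s := by
  have hexp : HasDerivAt (fun s => exp (α * (s - t))) (exp (α * (s - t)) * α) s := by
    simpa using (((hasDerivAt_id s).sub_const t).const_mul α).exp
  exact (hexp.mul (hv s).hasDerivAt).congr_deriv (by ring)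

theorem neg_mul_sub_le_exp_mul_sub_mul_sub (hv : Differentiable ℝ v)
    (h : ∀ s, β ≤ deriv v s + α * v s) (t r : ℝ) :
    ∀ x ∈ Icc (t - r) (t + r), ∀ y ∈ Icc (t - r) (t + r), x ≤ y →
      -(|β| * exp (|α| * r)) * (y - x) ≤
        exp (α * (y - t)) * v y - exp (α * (x - t)) * v x := by
  have hg := hasDerivAt_exp_mul_sub_mul (α := α) hv t
  refine (convex_Icc _ _).mul_sub_le_image_sub_of_le_deriv
    (fun s _ => (hg s).continuousAt.continuousWithinAt)
    (fun s _ => (hg s).differentiableAt.differentiableWithinAt) fun s hs => ?_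
  rw [interior_Icc] at hs
  have hweight : exp (α * (s - t)) ≤ exp (|α| * r) := by
    refine exp_le_exp.mpr ?_
    calc α * (s - t) ≤ |α * (s - t)| := le_abs_self _
      _ = |α| * |s - t| := abs_mul _ _
      _ ≤ |α| * r := by gcongr; exact abs_sub_le_iff.mpr ⟨by linarith [hs.2], by linarith [hs.1]⟩
  calc -(|β| * exp (|α| * r)) ≤ -(|β| * exp (α * (s - t))) := by gcongr
    _ ≤ exp (α * (s - t)) * β := by
        rw [mul_comm]; exact neg_le_of_abs_le (by rw [abs_mul, abs_exp])
    _ ≤ exp (α * (s - t)) * (deriv v s + α * v s) := by gcongr; exact h s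
    _ = _ := (hg s).deriv.symm

theorem abs_le_of_eq_zero_of_eq_zero (hv : Differentiable ℝ v)
    (h : ∀ s, β ≤ deriv v s + α * v s) {t a b : ℝ} (ha : a ∈ Icc (t - 1) t)
    (hb : b ∈ Icc t (t + 1)) (hva : v a = 0) (hvb : v b = 0) :
    |v t| ≤ |β| * exp |α| := by
  have key := neg_mul_sub_le_exp_mul_sub_mul_sub hv h t 1
  have ht : t ∈ Icc (t - 1) (t + 1) := ⟨by linarith, by linarith⟩
  have hC : 0 ≤ |β| * exp |α| := by positivity
  have hlower := key a ⟨ha.1, by linarith [ha.2]⟩ t ht ha.2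
  have hupper := key t ht b ⟨by linarith [hb.1], hb.2⟩ hb.1
  simp only [mul_one, sub_self, mul_zero, exp_zero, one_mul, hva, hvb] at hlower hupper
  rw [abs_le]
  constructor <;> nlinarith [ha.1, hb.2]

end IntegratingFactor

/-- Lemma 5.3 (Lemma 6.3 of [FLSV]): if `w` is a 1-periodic `C²` function with
`w'' + α w' ≥ β` everywhere, then `|w'| ≤ 2|β| e^{2|α|}`. -/
theorem stmt0 (w : ℝ → ℝ) (hw : ContDiff ℝ 2 w)
    (hper : ∀ t : ℝ, w (t + 1) = w t) (α β : ℝ)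
    (h : ∀ t : ℝ, deriv (deriv w) t + α * deriv w t ≥ β) :
    ∀ t : ℝ, |deriv w t| ≤ 2 * |β| * Real.exp (2 * |α|) := by
  intro t
  have hv : Differentiable ℝ (deriv w) :=
    ((contDiff_succ_iff_deriv.mp (show ContDiff ℝ (1 + 1) w from hw)).2.2).differentiable
      one_ne_zero
  have hvper : Periodic (deriv w) 1 := Periodic.deriv hper
  obtain ⟨c, hmax⟩ := Periodic.exists_forall_ge hper one_ne_zero hw.continuous
  have hc : deriv w c = 0 := IsLocalMax.deriv_eq_zero (Filter.Eventually.of_forall hmax)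
  obtain ⟨a, ha, hca⟩ := hvper.exists_mem_Ico one_pos c (t - 1)
  obtain ⟨b, hb, hcb⟩ := hvper.exists_mem_Ico one_pos c t
  calc |deriv w t| ≤ |β| * exp |α| := abs_le_of_eq_zero_of_eq_zero hv h
        ⟨ha.1, by linarith [ha.2]⟩ (Ico_subset_Icc_self hb) (hca ▸ hc) (hcb ▸ hc)
    _ ≤ 2 * |β| * exp (2 * |α|) := by
        have : exp |α| ≤ exp (2 * |α|) := exp_le_exp.mpr (by linarith [abs_nonneg α])
        nlinarith [abs_nonneg β, exp_pos |α|]
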